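/- arXiv:math/0406518 — 4 statements merged into one kernel-verified Lean document; each statement's English description precedes it below -/
import Mathlib

section
/- For any two q-tuples β, λ of elements of a Hilbert space H with ⟨β, mᵀ⟩ and ⟨λ, mᵀ⟩ invertible, the adjoint projectors satisfy Π_β* Π_λ* = Π_β*, where Π_β* α = α − ⟨α, βᵀ⟩ (⟨β, mᵀ⟩ᵀ)⁻¹ m is the adjoint of Π_β. In particular each Π_β* is idempotent. -/
/-- The adjoint projectors `Π_β* α = α − ⟨α, βᵀ⟩ (⟨β, mᵀ⟩ᵀ)⁻¹ m` satisfy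
`Π_β* Π_λ* = Π_β*`; in particular each `Π_β*` is idempotent. -/
theorem stmt3 {H : Type*} [NormedAddCommGroup H] [InnerProductSpace ℝ H]
    {q : ℕ} (m β lam : Fin q → H)
    (B L : Matrix (Fin q) (Fin q) ℝ)
    (hB : B = fun i j => inner (𝕜 := ℝ) (β i) (m j))
    (hL : L = fun i j => inner (𝕜 := ℝ) (lam i) (m j))
    (hBinv : IsUnit B) (hLinv : IsUnit L)
    (Pβ Pl : H → H)
    (hPβ : ∀ α, Pβ α = α - ∑ i, (∑ j, inner (𝕜 := ℝ) α (β j) * (B.transpose)⁻¹ j i) • m i)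
    (hPl : ∀ α, Pl α = α - ∑ i, (∑ j, inner (𝕜 := ℝ) α (lam j) * (L.transpose)⁻¹ j i) • m i) :
    (∀ α, Pβ (Pl α) = Pβ α) ∧ (∀ α, Pβ (Pβ α) = Pβ α) := by
  have hBT : B.transpose * (B.transpose)⁻¹ = 1 :=
    Matrix.mul_nonsing_inv _ (by
      rw [Matrix.det_transpose]
      exact (Matrix.isUnit_iff_isUnit_det B).mp hBinv)
  have hm : ∀ k j, inner (𝕜 := ℝ) (m k) (β j) = B j k := by
    intro k j; rw [hB]; exact real_inner_comm _ _
  have key : ∀ (c : Fin q → ℝ) (α : H),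
      Pβ (α - ∑ i, c i • m i) = Pβ α := by
    intro c α
    rw [hPβ, hPβ]
    have hc : ∀ i, ∑ j, (∑ k, c k * B j k) * (B.transpose)⁻¹ j i = c i := by
      intro i
      have h1 : ∀ k, ∑ j, B j k * (B.transpose)⁻¹ j i = (1 : Matrix (Fin q) (Fin q) ℝ) k i := by
        intro k
        rw [← hBT]
        simp [Matrix.mul_apply, Matrix.transpose_apply]
      calc ∑ j, (∑ k, c k * B j k) * (B.transpose)⁻¹ j i
          = ∑ k, c k * ∑ j, B j k * (B.transpose)⁻¹ j i := by
            simp only [Finset.sum_mul]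
            rw [Finset.sum_comm]
            simp [Finset.mul_sum, mul_assoc]
        _ = c i := by
            simp [h1, Matrix.one_apply]
    have hcoef : ∀ i, (∑ j, inner (𝕜 := ℝ) (α - ∑ k, c k • m k) (β j) * (B.transpose)⁻¹ j i)
        = (∑ j, inner (𝕜 := ℝ) α (β j) * (B.transpose)⁻¹ j i) - c i := by
      intro i
      simp only [inner_sub_left, sum_inner, real_inner_smul_left, hm, sub_mul,
        Finset.sum_sub_distrib]
      rw [hc]
    simp only [hcoef, sub_smul, Finset.sum_sub_distrib]
    abel
  constructor
  · intro α
    conv_lhs => rw [hPl α]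
    exact key _ _
  · intro α
    conv_lhs => rw [hPβ α]
    exact key _ _
end

section
/- Let g : [0,1] → ℝ^k be square-integrable with Γ_s := ∫_s¹ g(t)g(t)ᵀ dt invertible for all 0 ≤ s < 1. Then for any ψ ∈ L²[0,1], the transformed function (𝓛ψ)(t) := ψ(t) − (∫_0^t ψ(s) g(s)ᵀ Γ_s⁻¹ ds) g(t) satisfies ∫_0¹ (𝓛ψ)(t) g(t)ᵀ dt = 0, i.e., 𝓛ψ is orthogonal to every coordinate of g. -/
/-!
With `w(s) = ψ(s) g(s)ᵀ Γ_s⁻¹`, Fubini on the triangle `0 < s ≤ t ≤ 1` turns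
`∫₀¹ (∫₀ᵗ w) g(t) g(t)ᵀ dt` into `∫₀¹ w(s) Γ_s ds = ∫₀¹ ψ gᵀ`, which cancels the first term of
`∫₀¹ (𝓛ψ) gᵀ`. The absolute-integrability hypothesis justifies Fubini once the entries of `Γ_s⁻¹`
are known to be measurable, which follows from the continuity of `s ↦ Γ_s`.
-/

open MeasureTheory intervalIntegral Set

section Triangle

variable {a b : ℝ} {f h : ℝ → ℝ}

lemma setIntegral_indicator_le_left {t : ℝ} (ht : t ∈ Ioc a b) :
    ∫ s in Ioc a b, {p : ℝ × ℝ | p.1 ≤ p.2}.indicator (fun p => f p.1 * h p.2) (s, t)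
      = (∫ s in a..t, f s) * h t := by
  change ∫ s in Ioc a b, (Iic t).indicator (fun s => f s * h t) s = _
  rw [MeasureTheory.integral_indicator measurableSet_Iic,
    Measure.restrict_restrict measurableSet_Iic, Iic_inter_Ioc_of_le ht.2,
    MeasureTheory.integral_mul_const, integral_of_le ht.1.le]

lemma setIntegral_indicator_le_right {s : ℝ} (hs : s ∈ Ioc a b) :
    ∫ t in Ioc a b, {p : ℝ × ℝ | p.1 ≤ p.2}.indicator (fun p => f p.1 * h p.2) (s, t)
      = f s * ∫ t in s..b, h t := by
  change ∫ t in Ioc a b, (Ici s).indicator (fun t => f s * h t) t = _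
  have hinter : Ici s ∩ Ioc a b = Icc s b := by
    ext x
    simp only [mem_inter_iff, mem_Ici, mem_Ioc, mem_Icc]
    exact ⟨fun ⟨hsx, _, hxb⟩ => ⟨hsx, hxb⟩, fun ⟨hsx, hxb⟩ => ⟨hsx, hs.1.trans_le hsx, hxb⟩⟩
  rw [MeasureTheory.integral_indicator measurableSet_Ici,
    Measure.restrict_restrict measurableSet_Ici, hinter, MeasureTheory.integral_const_mul,
    integral_Icc_eq_integral_Ioc, integral_of_le hs.2]

variable (hfh : IntegrableOn (fun p : ℝ × ℝ => f p.1 * h p.2) (Ioc a b ×ˢ Ioc a b))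
include hfh

lemma integrable_indicator_le_mul :
    Integrable ({p : ℝ × ℝ | p.1 ≤ p.2}.indicator fun p => f p.1 * h p.2)
      ((volume.restrict (Ioc a b)).prod (volume.restrict (Ioc a b))) := by
  rw [Measure.prod_restrict, ← Measure.volume_eq_prod]
  exact hfh.integrable.indicator (measurableSet_le measurable_fst measurable_snd)

theorem intervalIntegrable_primitive_mul (hab : a ≤ b) :
    IntervalIntegrable (fun t => (∫ s in a..t, f s) * h t) volume a b := by
  rw [intervalIntegrable_iff_integrableOn_Ioc_of_le hab]
  refine (integrable_indicator_le_mul hfh).integral_prod_right.congr ?_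
  filter_upwards [ae_restrict_mem measurableSet_Ioc] with t ht
  exact setIntegral_indicator_le_left ht

theorem intervalIntegrable_mul_tail (hab : a ≤ b) :
    IntervalIntegrable (fun s => f s * ∫ t in s..b, h t) volume a b := by
  rw [intervalIntegrable_iff_integrableOn_Ioc_of_le hab]
  refine (integrable_indicator_le_mul hfh).integral_prod_left.congr ?_
  filter_upwards [ae_restrict_mem measurableSet_Ioc] with s hs
  exact setIntegral_indicator_le_right hs

theorem integral_primitive_mul_eq_integral_mul_tail (hab : a ≤ b) :
    ∫ t in a..b, (∫ s in a..t, f s) * h t = ∫ s in a..b, f s * ∫ t in s..b, h t := by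
  rw [integral_of_le hab, integral_of_le hab,
    ← setIntegral_congr_fun measurableSet_Ioc fun t ht => setIntegral_indicator_le_left ht,
    ← setIntegral_congr_fun measurableSet_Ioc fun s hs => setIntegral_indicator_le_right hs]
  exact (integral_integral_swap (f := fun s t => {p : ℝ × ℝ | p.1 ≤ p.2}.indicator
    (fun p => f p.1 * h p.2) (s, t)) (integrable_indicator_le_mul hfh)).symm

end Triangle

section TriangleSum

variable {ι : Type*} {u : Finset ι} {a b : ℝ} {f h : ι → ℝ → ℝ}
  (hfh : ∀ l ∈ u, IntegrableOn (fun p : ℝ × ℝ => f l p.1 * h l p.2) (Ioc a b ×ˢ Ioc a b))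
include hfh

theorem intervalIntegrable_sum_primitive_mul (hab : a ≤ b) :
    IntervalIntegrable (fun t => ∑ l ∈ u, (∫ s in a..t, f l s) * h l t) volume a b := by
  simpa only [Finset.sum_fn] using
    IntervalIntegrable.sum u fun l hl => intervalIntegrable_primitive_mul (hfh l hl) hab

theorem integral_sum_primitive_mul_eq_integral_sum_mul_tail (hab : a ≤ b) :
    ∫ t in a..b, ∑ l ∈ u, (∫ s in a..t, f l s) * h l t
      = ∫ s in a..b, ∑ l ∈ u, f l s * ∫ t in s..b, h l t := by
  rw [integral_finsetSum fun l hl => intervalIntegrable_primitive_mul (hfh l hl) hab,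
    integral_finsetSum fun l hl => intervalIntegrable_mul_tail (hfh l hl) hab]
  exact Finset.sum_congr rfl fun l hl => integral_primitive_mul_eq_integral_mul_tail (hfh l hl) hab

end TriangleSum

theorem IntervalIntegrable.mul_of_integrable_sq {μ : Measure ℝ} {a b : ℝ} {f g : ℝ → ℝ}
    (hf : AEStronglyMeasurable f μ) (hg : AEStronglyMeasurable g μ)
    (hf2 : IntervalIntegrable (fun t => f t ^ 2) μ a b)
    (hg2 : IntervalIntegrable (fun t => g t ^ 2) μ a b) :
    IntervalIntegrable (fun t => f t * g t) μ a b := by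
  rw [intervalIntegrable_iff] at *
  exact ((memLp_two_iff_integrable_sq hf.restrict).2 hf2).integrable_mul
    ((memLp_two_iff_integrable_sq hg.restrict).2 hg2)

theorem IntegrableOn.mul_prod_of_abs {α β : Type*} [MeasurableSpace α] [MeasurableSpace β]
    {μ : Measure α} {ν : Measure β} [SFinite μ] [SFinite ν] {s : Set α} {t : Set β}
    {f : α → ℝ} {h : β → ℝ} (hf : AEStronglyMeasurable f (μ.restrict s))
    (hh : AEStronglyMeasurable h (ν.restrict t))
    (habs : IntegrableOn (fun p : α × β => |f p.1 * h p.2|) (s ×ˢ t) (μ.prod ν)) :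
    IntegrableOn (fun p : α × β => f p.1 * h p.2) (s ×ˢ t) (μ.prod ν) := by
  rw [IntegrableOn, ← Measure.prod_restrict] at *
  exact (integrable_norm_iff (hf.comp_fst.mul hh.comp_snd)).1 habs

theorem integrableOn_vecMul_mul_prod {n : Type*} [Fintype n] {s : Set ℝ} {ψ : ℝ → ℝ}
    {g : ℝ → n → ℝ} {N : ℝ → Matrix n n ℝ} (hψ : Measurable ψ)
    (hg : ∀ i, Measurable fun t => g t i)
    (hN : ∀ i l, AEMeasurable (fun s => N s i l) (volume.restrict s)) (j l : n)
    (habs : ∀ i, IntegrableOn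
      (fun p : ℝ × ℝ => |ψ p.1 * g p.1 i * N p.1 i l * g p.2 l * g p.2 j|) (s ×ˢ s)) :
    IntegrableOn
      (fun p : ℝ × ℝ => Matrix.vecMul (fun i => ψ p.1 * g p.1 i) (N p.1) l * (g p.2 l * g p.2 j))
      (s ×ˢ s) := by
  simp only [Matrix.vecMul, dotProduct, Finset.sum_mul]
  rw [Measure.volume_eq_prod] at habs ⊢
  refine integrable_finsetSum _ fun i _ => IntegrableOn.mul_prod_of_abs
    (f := fun s => ψ s * g s i * N s i l) (h := fun t => g t l * g t j) ?_ ?_ ?_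
  · exact ((hψ.mul (hg i)).aemeasurable.mul (hN i l)).aestronglyMeasurable
  · exact ((hg l).mul (hg j)).aestronglyMeasurable
  · simpa only [mul_assoc] using habs i

theorem ContinuousOn.aemeasurable_inv_apply {α n : Type*} [TopologicalSpace α]
    [MeasurableSpace α] [OpensMeasurableSpace α] [Fintype n] [DecidableEq n] {μ : Measure α}
    {s : Set α} {A : α → Matrix n n ℝ} (hA : ContinuousOn A s) (hs : MeasurableSet s) (i j : n) :
    AEMeasurable (fun x => (A x)⁻¹ i j) (μ.restrict s) := by
  simp only [Matrix.inv_def, Matrix.smul_apply, Ring.inverse_eq_inv', smul_eq_mul]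
  exact ((continuous_id.matrix_det.comp_continuousOn hA).aemeasurable hs).inv.mul
    (((continuous_id.matrix_adjugate.matrix_elem i j).comp_continuousOn hA).aemeasurable hs)

theorem continuousOn_integral_gram_left {n : Type*} {g : ℝ → n → ℝ} {a b : ℝ}
    (hg : ∀ i j, IntervalIntegrable (fun t => g t i * g t j) volume a b) :
    ContinuousOn (fun s i j => ∫ t in s..b, g t i * g t j) (uIcc a b) :=
  continuousOn_pi.2 fun i => continuousOn_pi.2 fun j =>
    continuousOn_primitive_interval_left ((intervalIntegrable_iff').1 (hg i j))

/-- With `Γ_s = ∫_s¹ g gᵀ dt` invertible for `s ∈ [0,1)`, the transform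
`(𝓛ψ)(t) = ψ(t) − (∫_0^t ψ(s) g(s)ᵀ Γ_s⁻¹ ds) g(t)` satisfies
`∫_0¹ (𝓛ψ)(t) g(t)ᵀ dt = 0`, i.e. `𝓛ψ` is orthogonal to every coordinate of `g`. -/
theorem stmt9 {k : ℕ} (g : ℝ → Fin k → ℝ) (ψ : ℝ → ℝ)
    (hgm : ∀ i, Measurable fun t => g t i) (hψm : Measurable ψ)
    (hg2 : ∀ i j, IntervalIntegrable (fun t => g t i * g t j) volume 0 1)
    (hψ2 : IntervalIntegrable (fun t => ψ t ^ 2) volume 0 1)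
    (Γ : ℝ → Matrix (Fin k) (Fin k) ℝ)
    (hΓ : ∀ s, Γ s = fun i j => ∫ t in s..(1 : ℝ), g t i * g t j)
    (hΓinv : ∀ s ∈ Set.Ico (0 : ℝ) 1, IsUnit (Γ s))
    (Lψ : ℝ → ℝ)
    (hLψ : ∀ t, Lψ t =
      ψ t - ∑ j, (∫ s in (0 : ℝ)..t, ∑ i, ψ s * g s i * (Γ s)⁻¹ i j) * g t j)
    -- absolute convergence / Fubini justification:
    (hFub : ∀ i j l, IntegrableOn
      (fun p : ℝ × ℝ => |ψ p.1 * g p.1 i * (Γ p.1)⁻¹ i l * g p.2 l * g p.2 j|)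
      (Set.Ioc (0 : ℝ) 1 ×ˢ Set.Ioc (0 : ℝ) 1) volume) :
    ∀ j, ∫ t in (0 : ℝ)..1, Lψ t * g t j = 0 := by
  intro j
  set w : ℝ → Fin k → ℝ := fun s => Matrix.vecMul (fun i => ψ s * g s i) (Γ s)⁻¹ with hw
  have hΓc : ContinuousOn Γ (Icc 0 1) := by
    rw [funext hΓ, ← uIcc_of_le zero_le_one]
    exact continuousOn_integral_gram_left hg2
  have hwg : ∀ l ∈ Finset.univ, IntegrableOn (fun p : ℝ × ℝ => w p.1 l * (g p.2 l * g p.2 j))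
      (Ioc 0 1 ×ˢ Ioc 0 1) := fun l _ =>
    integrableOn_vecMul_mul_prod hψm hgm
      ((hΓc.mono Ioc_subset_Icc_self).aemeasurable_inv_apply measurableSet_Ioc) j l (hFub · j l)
  have hψg : IntervalIntegrable (fun t => ψ t * g t j) volume 0 1 :=
    .mul_of_integrable_sq hψm.aestronglyMeasurable (hgm j).aestronglyMeasurable hψ2
      (by simpa only [sq] using hg2 j j)
  have hL : ∀ t, Lψ t * g t j = ψ t * g t j - ∑ l, (∫ s in 0..t, w s l) * (g t l * g t j) := by
    intro t
    rw [hLψ, sub_mul, Finset.sum_mul]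
    exact congrArg _ (Finset.sum_congr rfl fun l _ => mul_assoc _ _ _)
  have hwΓ : ∀ s ∈ Ioo (0 : ℝ) 1, ∑ l, w s l * Γ s l j = ψ s * g s j := fun s hs => by
    change Matrix.vecMul (w s) (Γ s) j = _
    rw [hw, Matrix.vecMul_vecMul, Matrix.nonsing_inv_mul _ ((Γ s).isUnit_iff_isUnit_det.1
      (hΓinv s (Ioo_subset_Ico_self hs))), Matrix.vecMul_one]
  calc ∫ t in (0 : ℝ)..1, Lψ t * g t j
      = (∫ t in (0 : ℝ)..1, ψ t * g t j)
          - ∫ t in (0 : ℝ)..1, ∑ l, (∫ s in 0..t, w s l) * (g t l * g t j) := by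
        simp_rw [hL]
        exact integral_sub hψg (intervalIntegrable_sum_primitive_mul hwg zero_le_one)
    _ = (∫ t in (0 : ℝ)..1, ψ t * g t j) - ∫ s in (0 : ℝ)..1, ∑ l, w s l * Γ s l j := by
        rw [integral_sum_primitive_mul_eq_integral_sum_mul_tail hwg zero_le_one]
        simp only [hΓ]
    _ = 0 := by
        rw [sub_eq_zero, integral_of_le zero_le_one, integral_of_le zero_le_one,
          integral_Ioc_eq_integral_Ioo, integral_Ioc_eq_integral_Ioo]
        exact setIntegral_congr_fun measurableSet_Ioo fun s hs => (hwΓ s hs).symm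
end

section
/- Under the same setting, the transformation 𝓛 is norm preserving: ∫_0¹ (𝓛ψ)²(t) dt = ∫_0¹ ψ²(t) dt for all ψ ∈ L²[0,1] for which the defining integrals converge. -/
/-!
Write `A(t) = ∫_0^t ψ gᵀ Γ⁻¹`, so that `𝓛ψ = ψ - A g`. The quadratic form `Φ(t) = A(t) Γ_t A(t)ᵀ`
is absolutely continuous and vanishes at both ends (`A(0) = 0`, `Γ_1 = 0`). Since `A' Γ = ψ gᵀ`,
`Γ' = -g gᵀ` and `Γ` is symmetric, `Φ' = 2ψ (A g) - (A g)² = ψ² - (𝓛ψ)²` almost everywhere, and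
integrating over `[0, 1]` gives the isometry.

Integrability of `ψ gᵀ Γ⁻¹` comes from the absolute Fubini bound with `j = l`: integrating out
the second variable leaves `|ψ g_i (Γ⁻¹)_il| ∫ g_l²`, and `∫ g_l² ≠ 0` because `Γ_0` is invertible.
-/

open MeasureTheory Set intervalIntegral Matrix

theorem AbsolutelyContinuousOnInterval.fun_finset_sum {ι F : Type*} [NormedAddCommGroup F]
    {a b : ℝ} (s : Finset ι) {f : ι → ℝ → F}
    (hf : ∀ i ∈ s, AbsolutelyContinuousOnInterval (f i) a b) :
    AbsolutelyContinuousOnInterval (fun x => ∑ i ∈ s, f i x) a b := by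
  classical
  induction s using Finset.induction_on with
  | empty =>
    simpa using (LipschitzWith.const (0 : F)).lipschitzOnWith.absolutelyContinuousOnInterval
  | insert i s hi ih =>
    simp only [Finset.sum_insert hi]
    exact (hf i (s.mem_insert_self i)).fun_add (ih fun j hj => hf j (Finset.mem_insert_of_mem hj))

namespace IntervalIntegrable

variable {f : ℝ → ℝ} {a b : ℝ}

theorem absolutelyContinuousOnInterval_integral_left (hf : IntervalIntegrable f volume a b) :
    AbsolutelyContinuousOnInterval (fun x => ∫ t in x..b, f t) a b := by
  simpa only [integral_symm b] using
    (hf.absolutelyContinuousOnInterval_intervalIntegral right_mem_uIcc).fun_neg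

theorem ae_hasDerivAt_integral_left (hf : IntervalIntegrable f volume a b) :
    ∀ᵐ x, x ∈ uIcc a b → HasDerivAt (fun x => ∫ t in x..b, f t) (-f x) x := by
  filter_upwards [hf.ae_hasDerivAt_integral] with x hx hxab
  simpa only [integral_symm b] using (hx hxab b right_mem_uIcc).fun_neg

end IntervalIntegrable

section TailGram

variable {n : Type*}

noncomputable def tailGram (g : ℝ → n → ℝ) (b s : ℝ) : Matrix n n ℝ :=
  fun i j => ∫ t in s..b, g t i * g t j

variable {g : ℝ → n → ℝ} {b : ℝ}

theorem tailGram_isSymm (s : ℝ) : (tailGram g b s).IsSymm :=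
  Matrix.IsSymm.ext fun _ _ => integral_congr fun _ _ => mul_comm _ _

theorem tailGram_self : tailGram g b b = 0 := by
  ext i j
  exact integral_same

theorem continuousOn_tailGram {a : ℝ}
    (hg : ∀ i j, IntervalIntegrable (fun t => g t i * g t j) volume a b) :
    ContinuousOn (tailGram g b) (uIcc a b) :=
  continuousOn_pi.2 fun i => continuousOn_pi.2 fun j =>
    (hg i j).absolutelyContinuousOnInterval_integral_left.continuousOn

end TailGram

theorem sum_deriv_quadForm_eq_sq_sub_sq {n : Type*} [Fintype n] {G : Matrix n n ℝ} (hG : G.IsSymm)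
    {A a g : n → ℝ} {ψ : ℝ} (ha : a ᵥ* G = ψ • g) :
    ∑ j, ∑ l, ((a j * A l + A j * a l) * G j l + A j * A l * -(g j * g l))
      = ψ ^ 2 - (ψ - A ⬝ᵥ g) ^ 2 := by
  have h1 : ∑ j, ∑ l, a j * A l * G j l = ψ * (g ⬝ᵥ A) := by
    rw [← smul_eq_mul, ← smul_dotProduct, ← ha, Finset.sum_comm]
    simp only [dotProduct, Matrix.vecMul, Finset.sum_mul]
    exact Finset.sum_congr rfl fun l _ => Finset.sum_congr rfl fun j _ => by ring
  have h2 : ∑ j, ∑ l, A j * a l * G j l = ψ * (g ⬝ᵥ A) := by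
    rw [← h1, Finset.sum_comm]
    exact Finset.sum_congr rfl fun j _ => Finset.sum_congr rfl fun l _ => by
      rw [hG.apply l j]; ring
  have h3 : ∑ j, ∑ l, A j * A l * (g j * g l) = (A ⬝ᵥ g) ^ 2 := by
    simp only [dotProduct, sq, Finset.sum_mul_sum]
    exact Finset.sum_congr rfl fun j _ => Finset.sum_congr rfl fun l _ => by ring
  simp only [add_mul, mul_neg, Finset.sum_add_distrib, Finset.sum_neg_distrib, h1, h2, h3,
    dotProduct_comm g A]
  ring

theorem integral_sq_sub_primitive_dotProduct_eq_integral_sq {n : Type*} [Fintype n] {a b : ℝ}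
    {ψ : ℝ → ℝ} {g h : ℝ → n → ℝ}
    (hψ : IntervalIntegrable (fun t => ψ t ^ 2) volume a b)
    (hg : ∀ i j, IntervalIntegrable (fun t => g t i * g t j) volume a b)
    (hh : ∀ l, IntervalIntegrable (fun t => h t l) volume a b)
    (hhΓ : ∀ᵐ s, s ∈ uIcc a b → h s ᵥ* tailGram g b s = ψ s • g s) :
    ∫ t in a..b, (ψ t - (fun l => ∫ s in a..t, h s l) ⬝ᵥ g t) ^ 2 = ∫ t in a..b, ψ t ^ 2 := by
  set A : ℝ → n → ℝ := fun t l => ∫ s in a..t, h s l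
  set Φ : ℝ → ℝ := fun t => ∑ j, ∑ l, A t j * A t l * tailGram g b t j l
  have hΦac : AbsolutelyContinuousOnInterval Φ a b :=
    .fun_finset_sum _ fun j _ => .fun_finset_sum _ fun l _ =>
      (((hh j).absolutelyContinuousOnInterval_intervalIntegral left_mem_uIcc).fun_mul
        ((hh l).absolutelyContinuousOnInterval_intervalIntegral left_mem_uIcc)).fun_mul
        (hg j l).absolutelyContinuousOnInterval_integral_left
  have hΦ : ∫ t in a..b, deriv Φ t = 0 := by
    rw [hΦac.integral_deriv_eq_sub]
    simp [Φ, A, tailGram_self]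
  have hderiv : ∀ᵐ t, t ∈ uIcc a b → deriv Φ t = ψ t ^ 2 - (ψ t - A t ⬝ᵥ g t) ^ 2 := by
    have hA := ae_all_iff.2 fun l => (hh l).ae_hasDerivAt_integral
    have hΓ := ae_all_iff.2 fun i => ae_all_iff.2 fun j => (hg i j).ae_hasDerivAt_integral_left
    filter_upwards [hA, hΓ, hhΓ] with t hAt hΓt hht ht
    rw [← sum_deriv_quadForm_eq_sq_sub_sq (tailGram_isSymm t) (hht ht)]
    exact (HasDerivAt.fun_sum fun j _ => HasDerivAt.fun_sum fun l _ =>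
      ((hAt j ht a left_mem_uIcc).mul (hAt l ht a left_mem_uIcc)).mul (hΓt j l ht)).deriv
  calc ∫ t in a..b, (ψ t - A t ⬝ᵥ g t) ^ 2 = ∫ t in a..b, (ψ t ^ 2 - deriv Φ t) :=
        integral_congr_ae (hderiv.mono fun t ht hti => by rw [ht (uIoc_subset_uIcc hti)]; ring)
    _ = ∫ t in a..b, ψ t ^ 2 := by
        rw [integral_sub hψ hΦac.intervalIntegrable_deriv, hΦ, sub_zero]

theorem integrable_of_integrable_abs_mul_prod {α β : Type*} [MeasurableSpace α]
    [MeasurableSpace β] {μ : Measure α} {ν : Measure β} [SFinite ν] {f : α → ℝ} {w : β → ℝ}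
    (hf : AEStronglyMeasurable f μ)
    (hfw : Integrable (fun p : α × β => |f p.1 * w p.2|) (μ.prod ν))
    (hw : ∫ y, |w y| ∂ν ≠ 0) : Integrable f μ := by
  have h := hfw.integral_prod_left.mul_const (∫ y, |w y| ∂ν)⁻¹
  simp only [abs_mul, MeasureTheory.integral_const_mul, mul_assoc, mul_inv_cancel₀ hw,
    mul_one] at h
  exact (integrable_norm_iff hf).1 h

theorem ContinuousOn.aestronglyMeasurable_inv_apply {X n : Type*} [TopologicalSpace X]
    [MeasurableSpace X] [OpensMeasurableSpace X] {μ : Measure X} [Fintype n] [DecidableEq n]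
    {M : X → Matrix n n ℝ} {s : Set X} (hM : ContinuousOn M s) (hs : MeasurableSet s) (i j : n) :
    AEStronglyMeasurable (fun x => (M x)⁻¹ i j) (μ.restrict s) := by
  have hdet := (continuous_id.matrix_det.comp_continuousOn hM).aestronglyMeasurable (μ := μ) hs
  have hadj := ((continuous_apply_apply i j).comp_continuousOn
    (continuous_id.matrix_adjugate.comp_continuousOn hM)).aestronglyMeasurable (μ := μ) hs
  simp only [inv_def, Ring.inverse_eq_inv', Matrix.smul_apply, smul_eq_mul]
  exact hdet.aemeasurable.inv.aestronglyMeasurable.mul hadj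

theorem integral_abs_mul_self_ne_zero_of_isUnit_tailGram {n : Type*} [Fintype n] [DecidableEq n]
    {g : ℝ → n → ℝ} {a b : ℝ} (hab : a ≤ b) {l : n}
    (hg : IntervalIntegrable (fun t => g t l * g t l) volume a b)
    (hΓ : IsUnit (tailGram g b a)) : ∫ t in Ioc a b, |g t l * g t l| ≠ 0 := by
  intro h0
  have hg0 := (integral_eq_zero_iff_of_nonneg (fun _ => abs_nonneg _) hg.1.abs).1 h0
  have hrow : ∀ j, tailGram g b a l j = 0 := fun j => by
    rw [tailGram, integral_of_le hab]
    exact integral_eq_zero_of_ae (hg0.mono fun t ht => by simp_all)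
  exact not_isUnit_zero (det_eq_zero_of_row_eq_zero l hrow ▸ (isUnit_iff_isUnit_det _).1 hΓ)

theorem stmt10_general {k : ℕ} (g : ℝ → Fin k → ℝ) (ψ : ℝ → ℝ)
    (hgm : ∀ i, Measurable fun t => g t i) (hψm : Measurable ψ)
    (hg2 : ∀ i j, IntervalIntegrable (fun t => g t i * g t j) volume 0 1)
    (hψ2 : IntervalIntegrable (fun t => ψ t ^ 2) volume 0 1)
    (Γ : ℝ → Matrix (Fin k) (Fin k) ℝ)
    (hΓ : ∀ s, Γ s = fun i j => ∫ t in s..(1 : ℝ), g t i * g t j)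
    (hΓinv : ∀ s ∈ Set.Ico (0 : ℝ) 1, IsUnit (Γ s))
    (Lψ : ℝ → ℝ)
    (hLψ : ∀ t, Lψ t =
      ψ t - ∑ j, (∫ s in (0 : ℝ)..t, ∑ i, ψ s * g s i * (Γ s)⁻¹ i j) * g t j)
    -- absolute convergence / Fubini justification:
    (hFub : ∀ i j l, IntegrableOn
      (fun p : ℝ × ℝ => |ψ p.1 * g p.1 i * (Γ p.1)⁻¹ i l * g p.2 l * g p.2 j|)
      (Set.Ioc (0 : ℝ) 1 ×ˢ Set.Ioc (0 : ℝ) 1) volume) :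
    ∫ t in (0 : ℝ)..1, Lψ t ^ 2 = ∫ t in (0 : ℝ)..1, ψ t ^ 2 := by
  obtain rfl : Γ = tailGram g 1 := funext hΓ
  set h : ℝ → Fin k → ℝ := fun s l => ∑ i, ψ s * g s i * (tailGram g 1 s)⁻¹ i l
  have hΓinvm : ∀ i l, AEStronglyMeasurable (fun s => (tailGram g 1 s)⁻¹ i l)
      (volume.restrict (Ioc 0 1)) :=
    ((continuousOn_tailGram hg2).mono (Ioc_subset_Icc_self.trans Icc_subset_uIcc)
      ).aestronglyMeasurable_inv_apply measurableSet_Ioc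
  have hh : ∀ l, IntervalIntegrable (fun s => h s l) volume 0 1 := fun l => by
    refine (intervalIntegrable_iff_integrableOn_Ioc_of_le zero_le_one).2
      (integrable_finsetSum _ fun i _ => integrable_of_integrable_abs_mul_prod
        ((hψm.aestronglyMeasurable.mul (hgm i).aestronglyMeasurable).mul (hΓinvm i l)) ?_
        (integral_abs_mul_self_ne_zero_of_isUnit_tailGram zero_le_one (hg2 l l)
          (hΓinv 0 ⟨le_rfl, zero_lt_one⟩)))
    rw [Measure.prod_restrict, ← Measure.volume_eq_prod]
    simpa only [mul_assoc, IntegrableOn] using hFub i l l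
  have hhΓ : ∀ᵐ s, s ∈ uIcc 0 1 → h s ᵥ* tailGram g 1 s = ψ s • g s := by
    filter_upwards [Measure.ae_ne volume 1] with s hs1 hs
    rw [uIcc_of_le zero_le_one] at hs
    have hu := (isUnit_iff_isUnit_det _).1 (hΓinv s ⟨hs.1, lt_of_le_of_ne hs.2 hs1⟩)
    have : h s = (ψ s • g s) ᵥ* (tailGram g 1 s)⁻¹ := by
      ext l
      simp [h, vecMul, dotProduct, mul_assoc]
    rw [this, vecMul_vecMul, nonsing_inv_mul _ hu, vecMul_one]
  calc ∫ t in (0 : ℝ)..1, Lψ t ^ 2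
      = ∫ t in (0 : ℝ)..1, (ψ t - (fun l => ∫ s in (0 : ℝ)..t, h s l) ⬝ᵥ g t) ^ 2 :=
        integral_congr fun t _ => by rw [hLψ]; rfl
    _ = ∫ t in (0 : ℝ)..1, ψ t ^ 2 :=
        integral_sq_sub_primitive_dotProduct_eq_integral_sq hψ2 hg2 hh hhΓ

/-- Under the same setting as the martingale transform, `𝓛` is norm preserving:
`∫_0¹ (𝓛ψ)² dt = ∫_0¹ ψ² dt`. -/
theorem stmt10 {k : ℕ} (g : ℝ → Fin k → ℝ) (ψ : ℝ → ℝ)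
    (hgm : ∀ i, Measurable fun t => g t i) (hψm : Measurable ψ)
    (hg2 : ∀ i j, IntervalIntegrable (fun t => g t i * g t j) volume 0 1)
    (hψ2 : IntervalIntegrable (fun t => ψ t ^ 2) volume 0 1)
    (Γ : ℝ → Matrix (Fin k) (Fin k) ℝ)
    (hΓ : ∀ s, Γ s = fun i j => ∫ t in s..(1 : ℝ), g t i * g t j)
    (hΓinv : ∀ s ∈ Set.Ico (0 : ℝ) 1, IsUnit (Γ s))
    (Lψ : ℝ → ℝ)
    (hLψ : ∀ t, Lψ t =
      ψ t - ∑ j, (∫ s in (0 : ℝ)..t, ∑ i, ψ s * g s i * (Γ s)⁻¹ i j) * g t j)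
    -- absolute convergence / Fubini justification:
    (hFub : ∀ i j l, IntegrableOn
      (fun p : ℝ × ℝ => |ψ p.1 * g p.1 i * (Γ p.1)⁻¹ i l * g p.2 l * g p.2 j|)
      (Set.Ioc (0 : ℝ) 1 ×ˢ Set.Ioc (0 : ℝ) 1) volume)
    (hL2 : IntervalIntegrable (fun t => Lψ t ^ 2) volume 0 1) :
    ∫ t in (0 : ℝ)..1, Lψ t ^ 2 = ∫ t in (0 : ℝ)..1, ψ t ^ 2 :=
  stmt10_general g ψ hgm hψm hg2 hψ2 Γ hΓ hΓinv Lψ hLψ hFub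
end

section
/- Let H be a probability measure on ℝᵖ, μ̇ ∈ L²(H)^q, and {A_z : z ∈ ℝ} a scanning family (A_z ⊆ A_{z'} for z ≤ z', H(A_{−∞}) = 0, H(A_∞) = 1). Define C_z := ∫_{A_z^c} μ̇ μ̇ᵀ dH, assumed invertible for all z, z(x) := inf{z : x ∈ A_z}, and (𝒦γ)(x) := γ(x) − (∫_{A_{z(x)}} γ(y) μ̇ᵀ(y) C_{z(y)}⁻¹ dH(y)) μ̇(x). Then for every γ ∈ L²(H) with γ supported in some A_k (k finite), ⟨𝒦γ, μ̇ᵀ⟩ = 0, i.e., 𝒦γ is orthogonal to every coordinate of μ̇. -/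
/-!
Let `R = {(x, y) | z(y) < z(x)}`. On a level set `{z = t}` the key relation reads
`y ∈ A_t ↔ x ∉ A_t`, which fails on the square of the level set; so every level set of `z` is
`H`-null, and then, up to null sets, the slices of `R` are `{y | z(y) < z(x)} = A_{z(x)}` and
`{x | z(y) < z(x)} = A_{z(y)}ᶜ`. With `g(y)ᵀ = γ(y) μ̇(y)ᵀ C_{z(y)}⁻¹`, Fubini applied to
`1_R(x, y) g(y)ᵀ μ̇(x) μ̇ₗ(x)` turns `∫ (∫_{A_{z(x)}} gᵀ dH) μ̇(x) μ̇ₗ(x) dH(x)` into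
`∫ g(y)ᵀ C_{z(y)} eₗ dH(y) = ∫ γ μ̇ₗ dH`.
-/

open MeasureTheory Filter

lemma Matrix.measurable_inv_apply {α ι : Type*} [MeasurableSpace α] [Fintype ι] [DecidableEq ι]
    {M : α → Matrix ι ι ℝ} (hM : ∀ i j, Measurable fun a => M a i j) (i j : ι) :
    Measurable fun a => (M a)⁻¹ i j := by
  have hM' : Measurable fun a i j => M a i j :=
    measurable_pi_lambda _ fun i => measurable_pi_lambda _ fun j => hM i j
  have hof : Continuous fun N : ι → ι → ℝ => Matrix.of N := continuous_id
  have hdet : Measurable fun N : ι → ι → ℝ => (Matrix.of N).det := hof.matrix_det.measurable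
  have hadj : Measurable fun N : ι → ι → ℝ => (Matrix.of N).adjugate i j :=
    (hof.matrix_adjugate.matrix_elem i j).measurable
  simp_rw [Matrix.inv_def, Matrix.smul_apply, Ring.inverse_eq_inv', smul_eq_mul]
  exact ((hdet.comp hM').inv).mul (hadj.comp hM')

lemma Matrix.sum_sum_mul_inv_mul {ι : Type*} [Fintype ι] [DecidableEq ι] {M : Matrix ι ι ℝ}
    (hM : IsUnit M) (v : ι → ℝ) (l : ι) :
    ∑ i, (∑ j, v j * M⁻¹ j i) * M i l = v l := by
  change Matrix.vecMul (Matrix.vecMul v M⁻¹) M l = v l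
  rw [Matrix.vecMul_vecMul, Matrix.nonsing_inv_mul _ ((Matrix.isUnit_iff_isUnit_det M).mp hM),
    Matrix.vecMul_one]

lemma Monotone.measurable_setIntegral {X β : Type*} [MeasurableSpace X] {μ : Measure X}
    [LinearOrder β] [TopologicalSpace β] [OrderClosedTopology β] [MeasurableSpace β]
    [BorelSpace β] {A : β → Set X} (hA : Monotone A) {f : X → ℝ} (hf : Integrable f μ) :
    Measurable fun z => ∫ x in A z, f x ∂μ := by
  have hmono : ∀ g : X → ℝ, Integrable g μ → 0 ≤ g → Monotone fun z => ∫ x in A z, g x ∂μ :=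
    fun g hg hg0 z z' hzz' =>
      setIntegral_mono_set hg.integrableOn (ae_of_all _ hg0) (hA hzz').eventuallyLE
  have hsplit : (fun z => ∫ x in A z, f x ∂μ) =
      fun z => (∫ x in A z, max (f x) 0 ∂μ) - ∫ x in A z, max (-f x) 0 ∂μ := by
    funext z
    rw [← integral_sub hf.pos_part.integrableOn hf.neg_part.integrableOn]
    simp_rw [max_zero_sub_max_neg_zero_eq_self]
  rw [hsplit]
  exact (hmono _ hf.pos_part fun x => le_max_right _ _).measurable.sub
    (hmono _ hf.neg_part fun x => le_max_right _ _).measurable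

lemma measurable_inv_apply_of_eq_setIntegral_compl {X ι : Type*} [MeasurableSpace X]
    [Fintype ι] [DecidableEq ι] {μ : Measure X} {A : ℝ → Set X} (hA : Monotone A)
    (hmeas : ∀ z, MeasurableSet (A z)) {m : X → ι → ℝ} (hm : ∀ i, MemLp (fun x => m x i) 2 μ)
    {C : ℝ → Matrix ι ι ℝ} (hC : ∀ z, C z = fun i j => ∫ x in (A z)ᶜ, m x i * m x j ∂μ)
    (i j : ι) : Measurable fun z => (C z)⁻¹ i j := by
  refine Matrix.measurable_inv_apply (fun i j => ?_) i j
  have hint : Integrable (fun x => m x i * m x j) μ := (hm i).integrable_mul (hm j)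
  have hCij : (fun z => C z i j) =
      fun z => (∫ x, m x i * m x j ∂μ) - ∫ x in A z, m x i * m x j ∂μ :=
    funext fun z => by rw [hC]; exact setIntegral_compl (hmeas z) hint
  rw [hCij]
  exact measurable_const.sub (hA.measurable_setIntegral hint)

section Fubini

variable {X Y : Type*} [MeasurableSpace X] [MeasurableSpace Y] {μ : Measure X} {ν : Measure Y}
  {R : Set (X × Y)} {B : X → Set Y} {B' : Y → Set X} {f : X → ℝ} {g : Y → ℝ}

lemma integral_indicator_prod_left (hR : MeasurableSet R)
    (hB : ∀ x, Prod.mk x ⁻¹' R =ᵐ[ν] B x) (x : X) :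
    ∫ y, R.indicator (fun p => f p.1 * g p.2) (x, y) ∂ν = f x * ∫ y in B x, g y ∂ν := by
  have hslice : (fun y => R.indicator (fun p => f p.1 * g p.2) (x, y)) =
      (Prod.mk x ⁻¹' R).indicator fun y => f x * g y :=
    rfl
  rw [hslice, integral_indicator (measurable_prodMk_left hR), setIntegral_congr_set (hB x),
    integral_const_mul]

lemma integral_indicator_prod_right (hR : MeasurableSet R)
    (hB' : ∀ y, (·, y) ⁻¹' R =ᵐ[μ] B' y) (y : Y) :
    ∫ x, R.indicator (fun p => f p.1 * g p.2) (x, y) ∂μ = g y * ∫ x in B' y, f x ∂μ := by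
  have hslice : (fun x => R.indicator (fun p => f p.1 * g p.2) (x, y)) =
      ((·, y) ⁻¹' R).indicator fun x => g y * f x := by
    ext x
    by_cases hx : (x, y) ∈ R <;> simp [hx, mul_comm]
  rw [hslice, integral_indicator (measurable_prodMk_right hR), setIntegral_congr_set (hB' y),
    integral_const_mul]

variable [SFinite ν] (hR : MeasurableSet R)
  (hfg : Integrable (fun p : X × Y => f p.1 * g p.2) (μ.prod ν))
include hR hfg

lemma integrable_mul_setIntegral_left (hB : ∀ x, Prod.mk x ⁻¹' R =ᵐ[ν] B x) :
    Integrable (fun x => f x * ∫ y in B x, g y ∂ν) μ :=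
  ((hfg.indicator hR).integral_prod_left).congr
    (ae_of_all _ (integral_indicator_prod_left hR hB))

lemma integrable_mul_setIntegral_right [SFinite μ] (hB' : ∀ y, (·, y) ⁻¹' R =ᵐ[μ] B' y) :
    Integrable (fun y => g y * ∫ x in B' y, f x ∂μ) ν :=
  ((hfg.indicator hR).integral_prod_right).congr
    (ae_of_all _ (integral_indicator_prod_right hR hB'))

lemma integral_mul_setIntegral_swap [SFinite μ] (hB : ∀ x, Prod.mk x ⁻¹' R =ᵐ[ν] B x)
    (hB' : ∀ y, (·, y) ⁻¹' R =ᵐ[μ] B' y) :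
    ∫ x, f x * ∫ y in B x, g y ∂ν ∂μ = ∫ y, g y * ∫ x in B' y, f x ∂μ ∂ν := by
  simp_rw [← integral_indicator_prod_left hR hB, ← integral_indicator_prod_right hR hB']
  exact integral_integral_swap (hfg.indicator hR)

end Fubini

lemma integral_sub_sum_mul_setIntegral_eq_zero {X ι : Type*} [MeasurableSpace X] [Fintype ι]
    {μ : Measure X} [SFinite μ] {R : Set (X × X)} {B B' : X → Set X} {f g : ι → X → ℝ}
    {h : X → ℝ} (hR : MeasurableSet R)
    (hfg : ∀ i, Integrable (fun p : X × X => f i p.1 * g i p.2) (μ.prod μ))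
    (hB : ∀ x, Prod.mk x ⁻¹' R =ᵐ[μ] B x) (hB' : ∀ y, (·, y) ⁻¹' R =ᵐ[μ] B' y)
    (hsum : ∀ y, ∑ i, g i y * ∫ x in B' y, f i x ∂μ = h y) :
    ∫ x, (h x - ∑ i, f i x * ∫ y in B x, g i y ∂μ) ∂μ = 0 := by
  simp_rw [← hsum]
  rw [integral_sub
      (integrable_finsetSum _ fun i _ => integrable_mul_setIntegral_right hR (hfg i) hB')
      (integrable_finsetSum _ fun i _ => integrable_mul_setIntegral_left hR (hfg i) hB),
    integral_finsetSum _ fun i _ => integrable_mul_setIntegral_right hR (hfg i) hB',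
    integral_finsetSum _ fun i _ => integrable_mul_setIntegral_left hR (hfg i) hB, sub_eq_zero]
  exact Finset.sum_congr rfl fun i _ => (integral_mul_setIntegral_swap hR (hfg i) hB hB').symm

lemma integrable_prod_mul_of_integrable_abs_terms {X ι : Type*} [MeasurableSpace X] [Fintype ι]
    {μ : Measure X} [SFinite μ] {m : X → ι → ℝ} {γ : X → ℝ} {M : X → Matrix ι ι ℝ}
    (hm : ∀ i, AEStronglyMeasurable (fun x => m x i) μ) (hγ : AEStronglyMeasurable γ μ)
    (hM : ∀ i j, AEStronglyMeasurable (fun y => M y i j) μ) (i l : ι)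
    (h : ∀ j, Integrable (fun p : X × X => |γ p.2 * m p.2 j * M p.2 j i * m p.1 i * m p.1 l|)
      (μ.prod μ)) :
    Integrable (fun p : X × X => m p.1 i * m p.1 l * (γ p.2 * ∑ j, m p.2 j * M p.2 j i))
      (μ.prod μ) := by
  have hg : AEStronglyMeasurable (fun y => γ y * ∑ j, m y j * M y j i) μ :=
    hγ.mul <| Finset.aestronglyMeasurable_fun_sum _ fun j _ => (hm j).mul (hM j i)
  refine (integrable_finsetSum Finset.univ fun j _ => h j).mono'
    (((hm i).mul (hm l)).comp_fst.mul hg.comp_snd) (ae_of_all _ fun p => ?_)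
  calc ‖m p.1 i * m p.1 l * (γ p.2 * ∑ j, m p.2 j * M p.2 j i)‖
      = |∑ j, γ p.2 * m p.2 j * M p.2 j i * m p.1 i * m p.1 l| := by
        rw [Real.norm_eq_abs, Finset.mul_sum, Finset.mul_sum]
        exact congrArg _ (Finset.sum_congr rfl fun j _ => by ring)
    _ ≤ _ := Finset.abs_sum_le_sum_abs _ _

lemma measure_eq_zero_of_ae_mem_iff_notMem {X : Type*} [MeasurableSpace X] {μ : Measure X}
    [SFinite μ] {S T : Set X}
    (h : ∀ᵐ p ∂μ.prod μ, p.1 ∈ S → p.2 ∈ S → (p.2 ∈ T ↔ p.1 ∉ T)) : μ S = 0 := by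
  have hsq : ∀ U ⊆ S, (∀ x ∈ U, ∀ y ∈ U, (y ∈ T ↔ x ∈ T)) → μ U = 0 := by
    intro U hUS hU
    have hprod : μ.prod μ (U ×ˢ U) = 0 := by
      refine measure_mono_null ?_ (ae_iff.mp h)
      rintro p ⟨hp₁, hp₂⟩ hgood
      exact iff_not_self ((hU _ hp₁ _ hp₂).symm.trans (hgood (hUS hp₁) (hUS hp₂)))
    rwa [Measure.prod_prod, mul_self_eq_zero] at hprod
  refine measure_mono_null (fun x hx => ?_) (measure_union_null
    (hsq (S ∩ T) Set.inter_subset_left fun x hx y hy => iff_of_true hy.2 hx.2)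
    (hsq (S \ T) Set.sdiff_subset fun x hx y hy => iff_of_false hy.2 hx.2))
  by_cases hxT : x ∈ T
  exacts [Or.inl ⟨hx, hxT⟩, Or.inr ⟨hx, hxT⟩]

section ScanningFamily

variable {X : Type*} {A : ℝ → Set X}

/-- The paper's `z(x)`. In `ℝ`, `sInf` of an empty or unbounded-below set is `0`, so the value is
junk unless `x` lies in some but not all of the `A z`. -/
noncomputable def scanLevel (A : ℝ → Set X) (x : X) : ℝ := sInf {z | x ∈ A z}

lemma mem_of_scanLevel_lt (hA : Monotone A) {x : X} (hx : ∃ z, x ∈ A z) {w : ℝ}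
    (h : scanLevel A x < w) : x ∈ A w := by
  by_cases hbdd : BddBelow {z | x ∈ A z}
  · obtain ⟨s, hs, hsw⟩ := (csInf_lt_iff hbdd hx).mp h
    exact hA hsw.le hs
  · obtain ⟨s, hs, hsw⟩ := not_bddBelow_iff.mp hbdd w
    exact hA hsw.le hs

lemma scanLevel_le_of_mem (hA : Monotone A) {x : X} (hx : ∃ z, x ∉ A z) {w : ℝ}
    (h : x ∈ A w) : scanLevel A x ≤ w := by
  obtain ⟨z, hz⟩ := hx
  refine csInf_le ⟨z, fun s hs => ?_⟩ h
  by_contra! hsz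
  exact hz (hA hsz.le hs)

variable [MeasurableSpace X] {μ : Measure X}

lemma ae_exists_mem_of_tendsto_atTop [IsProbabilityMeasure μ] (hmeas : ∀ z, MeasurableSet (A z))
    (htop : Tendsto (fun z => μ (A z)) atTop (nhds 1)) : ∀ᵐ x ∂μ, ∃ z, x ∈ A z := by
  have hcompl : Tendsto (fun z => μ (A z)ᶜ) atTop (nhds 0) := by
    simp_rw [prob_compl_eq_one_sub (hmeas _)]
    simpa using ENNReal.Tendsto.sub tendsto_const_nhds htop (Or.inl ENNReal.one_ne_top)
  rw [ae_iff, ← nonpos_iff_eq_zero]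
  exact ge_of_tendsto' hcompl fun z => measure_mono fun x hx => fun hz => hx ⟨z, hz⟩

lemma ae_exists_notMem_of_tendsto_atBot (hbot : Tendsto (fun z => μ (A z)) atBot (nhds 0)) :
    ∀ᵐ x ∂μ, ∃ z, x ∉ A z := by
  rw [ae_iff, ← nonpos_iff_eq_zero]
  exact ge_of_tendsto' hbot fun z => measure_mono fun x hx => not_not.mp fun hz => hx ⟨z, hz⟩

lemma measure_scanLevel_preimage_singleton [SFinite μ]
    (h : ∀ᵐ p ∂μ.prod μ, (p.2 ∈ A (scanLevel A p.1) ↔ p.1 ∉ A (scanLevel A p.2))) (t : ℝ) :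
    μ (scanLevel A ⁻¹' {t}) = 0 :=
  measure_eq_zero_of_ae_mem_iff_notMem <| by
    filter_upwards [h] with ⟨x, y⟩ hxy (hx : scanLevel A x = t) (hy : scanLevel A y = t)
    rwa [hx, hy] at hxy

variable [IsProbabilityMeasure μ] (hA : Monotone A) (hmeas : ∀ z, MeasurableSet (A z))
  (hbot : Tendsto (fun z => μ (A z)) atBot (nhds 0))
  (htop : Tendsto (fun z => μ (A z)) atTop (nhds 1))
include hA hmeas hbot htop

lemma ae_scanLevel_lt_iff_mem :
    ∀ᵐ x ∂μ, ∀ w, scanLevel A x ≠ w → (scanLevel A x < w ↔ x ∈ A w) := by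
  filter_upwards [ae_exists_mem_of_tendsto_atTop hmeas htop,
    ae_exists_notMem_of_tendsto_atBot hbot] with x hin hout w hne
  exact ⟨mem_of_scanLevel_lt hA hin, fun h => (scanLevel_le_of_mem hA hout h).lt_of_ne hne⟩

lemma setOf_scanLevel_lt_ae_eq {t : ℝ} (ht : μ (scanLevel A ⁻¹' {t}) = 0) :
    {x | scanLevel A x < t} =ᵐ[μ] A t := by
  rw [eventuallyEq_set]
  filter_upwards [ae_scanLevel_lt_iff_mem hA hmeas hbot htop,
    measure_eq_zero_iff_ae_notMem.mp ht] with x hx hxt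
  exact hx t hxt

lemma setOf_lt_scanLevel_ae_eq {t : ℝ} (ht : μ (scanLevel A ⁻¹' {t}) = 0) :
    {x | t < scanLevel A x} =ᵐ[μ] ((A t)ᶜ : Set X) := by
  rw [eventuallyEq_set]
  filter_upwards [ae_scanLevel_lt_iff_mem hA hmeas hbot htop,
    measure_eq_zero_iff_ae_notMem.mp ht] with x hx hxt
  rw [Set.mem_compl_iff, ← hx t hxt, not_lt]
  exact ⟨le_of_lt, fun h => h.lt_of_ne' hxt⟩

end ScanningFamily

theorem stmt15_general {p q : ℕ} (H : Measure (Fin p → ℝ)) [IsProbabilityMeasure H]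
    (A : ℝ → Set (Fin p → ℝ)) (hmono : Monotone A)
    (hmeasA : ∀ z, MeasurableSet (A z))
    (hbot : Tendsto (fun z => H (A z)) atBot (nhds 0))
    (htop : Tendsto (fun z => H (A z)) atTop (nhds 1))
    (mdot : (Fin p → ℝ) → Fin q → ℝ)
    (hm2 : ∀ i, MemLp (fun x => mdot x i) 2 H)
    (C : ℝ → Matrix (Fin q) (Fin q) ℝ)
    (hCdef : ∀ z, C z = fun i j => ∫ x in (A z)ᶜ, mdot x i * mdot x j ∂H)
    (hCinv : ∀ z, IsUnit (C z))
    (zx : (Fin p → ℝ) → ℝ) (hzx : ∀ x, zx x = sInf {z | x ∈ A z})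
    (hzxm : Measurable zx)
    -- the key measure-theoretic fact: `y ∈ A_{z(x)} ⟺ x ∈ A_{z(y)}ᶜ` a.e. `H × H`
    (hkey : ∀ᵐ pr ∂(H.prod H), (pr.2 ∈ A (zx pr.1) ↔ pr.1 ∉ A (zx pr.2)))
    (γ : (Fin p → ℝ) → ℝ) (hγ2 : MemLp γ 2 H)
    -- absolute convergence of the double integrals (Fubini justification):
    (hFub : ∀ i j l : Fin q, Integrable
      (fun pr : (Fin p → ℝ) × (Fin p → ℝ) =>
        |γ pr.2 * mdot pr.2 j * (C (zx pr.2))⁻¹ j i * mdot pr.1 i * mdot pr.1 l|)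
      (H.prod H))
    (K : ((Fin p → ℝ) → ℝ) → (Fin p → ℝ) → ℝ)
    (hK : ∀ g x, K g x =
      g x - ∑ i, (∫ y in A (zx x), g y * ∑ j, mdot y j * (C (zx y))⁻¹ j i ∂H) * mdot x i) :
    ∀ j, ∫ x, K γ x * mdot x j ∂H = 0 := by
  intro l
  obtain rfl : zx = scanLevel A := funext hzx
  have hatom := measure_scanLevel_preimage_singleton hkey
  have hCinvm := measurable_inv_apply_of_eq_setIntegral_compl hmono hmeasA hm2 hCdef
  set g : Fin q → (Fin p → ℝ) → ℝ :=
    fun i y => γ y * ∑ j, mdot y j * (C (scanLevel A y))⁻¹ j i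
  set f : Fin q → (Fin p → ℝ) → ℝ := fun i x => mdot x i * mdot x l
  set R := {pr : (Fin p → ℝ) × (Fin p → ℝ) | scanLevel A pr.2 < scanLevel A pr.1}
  have hR : MeasurableSet R :=
    measurableSet_lt (hzxm.comp measurable_snd) (hzxm.comp measurable_fst)
  have hB : ∀ x, Prod.mk x ⁻¹' R =ᵐ[H] A (scanLevel A x) := fun x =>
    setOf_scanLevel_lt_ae_eq hmono hmeasA hbot htop (hatom (scanLevel A x))
  have hB' : ∀ y, (·, y) ⁻¹' R =ᵐ[H] ((A (scanLevel A y))ᶜ : Set _) := fun y =>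
    setOf_lt_scanLevel_ae_eq hmono hmeasA hbot htop (hatom (scanLevel A y))
  have hfg : ∀ i, Integrable (fun pr : (Fin p → ℝ) × (Fin p → ℝ) => f i pr.1 * g i pr.2)
      (H.prod H) := fun i =>
    integrable_prod_mul_of_integrable_abs_terms (fun i => (hm2 i).1) hγ2.1
      (fun i j => ((hCinvm i j).comp hzxm).aestronglyMeasurable) i l (fun j => hFub i j l)
  have hpt : ∀ x, K γ x * mdot x l =
      γ x * mdot x l - ∑ i, f i x * ∫ y in A (scanLevel A x), g i y ∂H := by
    intro x
    simp only [hK, sub_mul, Finset.sum_mul, f, g]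
    congr 1
    exact Finset.sum_congr rfl fun i _ => by ring
  have hCC : ∀ y, ∑ i, g i y * ∫ x in (A (scanLevel A y))ᶜ, f i x ∂H = γ y * mdot y l := by
    intro y
    have hCil : ∀ i, ∫ x in (A (scanLevel A y))ᶜ, f i x ∂H = C (scanLevel A y) i l := fun i => by
      rw [hCdef]
    simp only [hCil, g, mul_assoc, ← Finset.mul_sum]
    rw [Matrix.sum_sum_mul_inv_mul (hCinv _)]
  calc ∫ x, K γ x * mdot x l ∂H
      = ∫ x, (γ x * mdot x l - ∑ i, f i x * ∫ y in A (scanLevel A x), g i y ∂H) ∂H := by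
        simp_rw [hpt]
    _ = 0 := integral_sub_sum_mul_setIntegral_eq_zero hR hfg hB hB' hCC

/-- Scanning-family transform: with `C_z = ∫_{A_zᶜ} μ̇ μ̇ᵀ dH` invertible,
`z(x) = inf{z : x ∈ A_z}` and
`(𝒦γ)(x) = γ(x) − (∫_{A_{z(x)}} γ μ̇ᵀ C_{z(·)}⁻¹ dH) μ̇(x)`, for every `γ ∈ L²(H)`
supported in some `A_k` one has `⟨𝒦γ, μ̇ⱼ⟩ = 0` for all `j`. -/
theorem stmt15 {p q : ℕ} (H : Measure (Fin p → ℝ)) [IsProbabilityMeasure H]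
    (A : ℝ → Set (Fin p → ℝ)) (hmono : Monotone A)
    (hmeasA : ∀ z, MeasurableSet (A z))
    (hbot : Tendsto (fun z => H (A z)) atBot (nhds 0))
    (htop : Tendsto (fun z => H (A z)) atTop (nhds 1))
    (mdot : (Fin p → ℝ) → Fin q → ℝ)
    (hmm : ∀ i, Measurable fun x => mdot x i)
    (hm2 : ∀ i, MemLp (fun x => mdot x i) 2 H)
    (C : ℝ → Matrix (Fin q) (Fin q) ℝ)
    (hCdef : ∀ z, C z = fun i j => ∫ x in (A z)ᶜ, mdot x i * mdot x j ∂H)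
    (hCinv : ∀ z, IsUnit (C z))
    (zx : (Fin p → ℝ) → ℝ) (hzx : ∀ x, zx x = sInf {z | x ∈ A z})
    (hzxm : Measurable zx)
    -- the key measure-theoretic fact: `y ∈ A_{z(x)} ⟺ x ∈ A_{z(y)}ᶜ` a.e. `H × H`
    (hkey : ∀ᵐ pr ∂(H.prod H), (pr.2 ∈ A (zx pr.1) ↔ pr.1 ∉ A (zx pr.2)))
    (γ : (Fin p → ℝ) → ℝ) (hγm : Measurable γ) (hγ2 : MemLp γ 2 H)
    (k : ℝ) (hsupp : ∀ x, x ∉ A k → γ x = 0)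
    -- absolute convergence of the double integrals (Fubini justification):
    (hFub : ∀ i j l : Fin q, Integrable
      (fun pr : (Fin p → ℝ) × (Fin p → ℝ) =>
        |γ pr.2 * mdot pr.2 j * (C (zx pr.2))⁻¹ j i * mdot pr.1 i * mdot pr.1 l|)
      (H.prod H))
    (K : ((Fin p → ℝ) → ℝ) → (Fin p → ℝ) → ℝ)
    (hK : ∀ g x, K g x =
      g x - ∑ i, (∫ y in A (zx x), g y * ∑ j, mdot y j * (C (zx y))⁻¹ j i ∂H) * mdot x i) :
    ∀ j, ∫ x, K γ x * mdot x j ∂H = 0 :=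
  stmt15_general H A hmono hmeasA hbot htop mdot hm2 C hCdef hCinv zx hzx hzxm hkey γ hγ2 hFub K hK
end
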